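/- There do not exist positive definite matrices X̂, Ŷ ∈ S^{n+1}_{++} with Â(X̂) + B̂(Ŷ) = 0. (That is, the sSDLCP obtained from the homogeneous feasibility model admits no strictly feasible point, so the strict feasibility assumption commonly imposed on SDLCPs can never hold for it.) -/

import Mathlib

open Matrix BigOperators

noncomputable section

/-- Real square matrices of size `k`. -/
abbrev Mat (k : ℕ) : Type := Matrix (Fin k) (Fin k) ℝ

/-- `dgE P q` is the block-diagonal `(n+1) × (n+1)` matrix `diag(P, q)`. -/
def dgE {n : ℕ} (P : Mat n) (q : ℝ) : Mat (n + 1) :=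
  Matrix.of fun i j =>
    if hi : (i : ℕ) < n then
      (if hj : (j : ℕ) < n then P ⟨i, hi⟩ ⟨j, hj⟩ else 0)
    else (if (j : ℕ) < n then 0 else q)

/-- Index type for `ℝ^{ñ₁}`, split as the first `m` coordinates, the next `n`
coordinates, and the last `ñ+1−m` (here `k`) coordinates; `ñ₁ = m + n + (ñ+1−m)`. -/
abbrev SIdx (n m k : ℕ) : Type := Fin m ⊕ Fin n ⊕ Fin k

/-- The linear map `Â : S^{n+1} → ℝ^{ñ₁}` of the sSDLCP. -/
def Ahat {n m k : ℕ} (A : Fin m → Mat n) (b : Fin m → ℝ) (Xh : Mat (n + 1)) :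
    SIdx n m k → ℝ
  | Sum.inl i => (dgE (A i) (-(b i)) * Xh).trace
  | Sum.inr (Sum.inl i) => Xh i.castSucc (Fin.last n)
  | Sum.inr (Sum.inr _) => 0

/-- The linear map `B̂ : S^{n+1} → ℝ^{ñ₁}` of the sSDLCP, where `dd` is the vector `d`. -/
def Bhat {n m k : ℕ} (B : Fin k → Mat n) (dd : Fin k → ℝ) (Yh : Mat (n + 1)) :
    SIdx n m k → ℝ
  | Sum.inl _ => 0
  | Sum.inr (Sum.inl _) => 0
  | Sum.inr (Sum.inr j) => (dgE (B j) (dd j) * Yh).trace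


/-! ### Auxiliary lemmas -/


lemma dgE_cc {n : ℕ} (P : Mat n) (q : ℝ) (i j : Fin n) :
    dgE P q i.castSucc j.castSucc = P i j := by
  simp [dgE]

lemma dgE_cl {n : ℕ} (P : Mat n) (q : ℝ) (i : Fin n) :
    dgE P q i.castSucc (Fin.last n) = 0 := by
  simp [dgE]

lemma dgE_lc {n : ℕ} (P : Mat n) (q : ℝ) (j : Fin n) :
    dgE P q (Fin.last n) j.castSucc = 0 := by
  simp [dgE]

lemma dgE_ll {n : ℕ} (P : Mat n) (q : ℝ) :
    dgE P q (Fin.last n) (Fin.last n) = q := by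
  simp [dgE]

/-- The trace of `diag(P, q) * Z` only sees the diagonal blocks of `Z`. -/
lemma trace_dgE_mul {n : ℕ} (P : Mat n) (q : ℝ) (Z : Mat (n + 1)) :
    (dgE P q * Z).trace
      = (P * Z.submatrix Fin.castSucc Fin.castSucc).trace
        + q * Z (Fin.last n) (Fin.last n) := by
  have h : (dgE P q * Z).trace = ∑ i : Fin (n+1), ∑ k : Fin (n+1), dgE P q i k * Z k i := by
    simp [Matrix.trace, Matrix.mul_apply, Matrix.diag]
  rw [h, Fin.sum_univ_castSucc]
  have h1 : ∀ i : Fin n, ∑ k : Fin (n+1), dgE P q i.castSucc k * Z k i.castSucc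
      = ∑ j : Fin n, P i j * Z j.castSucc i.castSucc := by
    intro i
    rw [Fin.sum_univ_castSucc]
    simp [dgE_cc, dgE_cl]
  have h2 : ∑ k : Fin (n+1), dgE P q (Fin.last n) k * Z k (Fin.last n)
      = q * Z (Fin.last n) (Fin.last n) := by
    rw [Fin.sum_univ_castSucc]
    simp [dgE_lc, dgE_ll]
  rw [Finset.sum_congr rfl (fun i _ => h1 i), h2]
  simp [Matrix.trace, Matrix.mul_apply, Matrix.diag, Matrix.submatrix_apply]

lemma posSemidef_diag_nonneg {k : ℕ} {M : Mat k} (hM : M.PosSemidef) (i : Fin k) :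
    0 ≤ M i i := by
  have := hM.dotProduct_mulVec_nonneg (Pi.single i 1)
  simpa [dotProduct, mulVec, Pi.single_apply, Finset.mul_sum, mul_comm] using this

lemma posDef_diag_pos {k : ℕ} {M : Mat k} (hM : M.PosDef) (i : Fin k) :
    0 < M i i := by
  have := hM.dotProduct_mulVec_pos (x := Pi.single i 1) (by
    intro h
    have := congrFun h i
    simp at this)
  simpa [dotProduct, mulVec, Pi.single_apply, Finset.mul_sum, mul_comm] using this

open scoped MatrixOrder in
/-- The trace of a product of two positive semidefinite matrices is nonnegative. -/
lemma trace_mul_nonneg {k : ℕ} {X Y : Mat k} (hX : X.PosSemidef) (hY : Y.PosSemidef) :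
    0 ≤ (X * Y).trace := by
  set S := CFC.sqrt X with hSdef
  have hS : S * S = X := CFC.sqrt_mul_sqrt_self X hX.nonneg
  have hH : Sᴴ = S := (CFC.sqrt_nonneg X).posSemidef.isHermitian
  have hM : (S * Y * S).PosSemidef := by
    have := hY.conjTranspose_mul_mul_same S
    rwa [hH] at this
  have : (X * Y).trace = (S * Y * S).trace := by
    rw [← hS, trace_mul_cycle S Y S]
  rw [this, Matrix.trace]
  exact Finset.sum_nonneg fun i _ => posSemidef_diag_nonneg hM i

/-- A symmetric real matrix whose square has trace zero is zero. -/
lemma symm_eq_zero_of_trace_sq {k : ℕ} {W : Mat k} (hW : W.IsSymm)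
    (h : (W * W).trace = 0) : W = 0 := by
  have hsum : ∑ i : Fin k, ∑ j : Fin k, (W i j)^2 = 0 := by
    rw [← h]
    simp only [Matrix.trace, Matrix.mul_apply, Matrix.diag]
    refine Finset.sum_congr rfl fun i _ => Finset.sum_congr rfl fun j _ => ?_
    have : W j i = W i j := by
      conv_lhs => rw [← hW]
      rfl
    rw [this]; ring
  ext i j
  have h1 := (Finset.sum_eq_zero_iff_of_nonneg
    (fun i _ => Finset.sum_nonneg fun j _ => sq_nonneg _)).mp hsum i (Finset.mem_univ i)
  have h2 := (Finset.sum_eq_zero_iff_of_nonneg (fun j _ => sq_nonneg _)).mp h1 j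
    (Finset.mem_univ j)
  simpa using pow_eq_zero_iff (n := 2) (by norm_num) |>.mp h2

lemma trace_mul_sum {n : ℕ} {ι : Type*} [Fintype ι] (Z : Mat n) (c : ι → ℝ)
    (M : ι → Mat n) :
    (Z * ∑ j, c j • M j).trace = ∑ j, c j * (Z * M j).trace := by
  rw [Matrix.mul_sum, Matrix.trace_sum]
  refine Finset.sum_congr rfl fun j _ => ?_
  rw [Matrix.mul_smul, Matrix.trace_smul, smul_eq_mul]

lemma trace_sum_mul {n : ℕ} {ι : Type*} [Fintype ι] (Z : Mat n) (c : ι → ℝ)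
    (M : ι → Mat n) :
    ((∑ j, c j • M j) * Z).trace = ∑ j, c j * (M j * Z).trace := by
  rw [Matrix.sum_mul, Matrix.trace_sum]
  refine Finset.sum_congr rfl fun j _ => ?_
  rw [Matrix.smul_mul, Matrix.trace_smul, smul_eq_mul]

/-- There do not exist positive definite `X̂, Ŷ ∈ S^{n+1}_{++}` with
`Â(X̂) + B̂(Ŷ) = 0`; the sSDLCP obtained from the homogeneous feasibility model admits
no strictly feasible point.  (Here `ñ` is written `nt`; `B j` denotes `B_{j+1}`, so
`B 0 = B₁`, and `d = (d₁, 0, …, 0)`.) -/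
theorem sSDLCP_no_strictly_feasible_point
    (n m nt : ℕ) (hm1 : 1 ≤ m) (hmn : m ≤ nt) (hnt : nt = n * (n + 1) / 2)
    (A : Fin m → Mat n) (b : Fin m → ℝ)
    (B : Fin (nt - m + 1) → Mat n) (d1 : ℝ)
    (hAsymm : ∀ i, (A i).IsSymm) (hAli : LinearIndependent ℝ A)
    (hBsymm : ∀ j, (B j).IsSymm)
    (hd1 : d1 ≠ 0)
    (hB1A : ∀ i, -(d1 * b i) + (B 0 * A i).trace = 0)
    (hBli : LinearIndependent ℝ (fun j : {j : Fin (nt - m + 1) // j ≠ 0} => B j.1))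
    (hBspan : ∀ W : Mat n,
        W ∈ Submodule.span ℝ (B '' {j | j ≠ 0}) ↔
          (W.IsSymm ∧ ∀ i, (W * A i).trace = 0))
    :
    ¬ ∃ Xh Yh : Mat (n + 1), Xh.PosDef ∧ Yh.PosDef ∧
        ∀ idx, Ahat A b Xh idx +
          Bhat B (fun j => if j = 0 then d1 else 0) Yh idx = 0 := by
  rintro ⟨Xh, Yh, hX, hY, hfeas⟩
  classical
  set X : Mat n := Xh.submatrix Fin.castSucc Fin.castSucc with hXdef
  set Y : Mat n := Yh.submatrix Fin.castSucc Fin.castSucc with hYdef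
  set t : ℝ := Xh (Fin.last n) (Fin.last n) with htdef
  set s : ℝ := Yh (Fin.last n) (Fin.last n) with hsdef
  have ht : 0 < t := posDef_diag_pos hX _
  have hs : 0 < s := posDef_diag_pos hY _
  -- the constraints
  have hAX : ∀ i, (A i * X).trace = b i * t := by
    intro i
    have h := hfeas (Sum.inl i)
    simp only [Ahat, Bhat, add_zero] at h
    rw [trace_dgE_mul] at h
    rw [← hXdef, ← htdef] at h
    linarith
  have hBY : ∀ j, (B j * Y).trace + (if j = 0 then d1 else 0) * s = 0 := by
    intro j
    have h := hfeas (Sum.inr (Sum.inr j))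
    simp only [Ahat, Bhat, zero_add] at h
    rw [trace_dgE_mul] at h
    rw [← hYdef, ← hsdef] at h
    exact h
  -- Y is symmetric
  have hYhs : Yhᵀ = Yh := by
    have := hY.isHermitian
    rwa [Matrix.IsHermitian, Matrix.conjTranspose_eq_transpose_of_trivial] at this
  have hYs : Y.IsSymm := by
    show Yᵀ = Y
    rw [hYdef, Matrix.transpose_submatrix, hYhs]
  -- the Gram linear map
  let φ : (Fin m → ℝ) →ₗ[ℝ] (Fin m → ℝ) :=
    { toFun := fun c i => ∑ j, c j * (A j * A i).trace
      map_add' := by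
        intro c c'
        funext i
        simp [add_mul, Finset.sum_add_distrib]
      map_smul' := by
        intro r c
        funext i
        simp [Finset.mul_sum, mul_assoc] }
  have hφapply : ∀ (c : Fin m → ℝ) (i : Fin m),
      ((∑ j, c j • A j) * A i).trace = φ c i := by
    intro c i
    rw [trace_sum_mul]
    rfl
  have hφ0 : ∀ c, φ c = 0 → c = 0 := by
    intro c hc
    set W : Mat n := ∑ j, c j • A j with hWdef
    have hWA : ∀ i, (W * A i).trace = 0 := by
      intro i
      rw [hWdef, hφapply c i, hc]
      rfl
    have hWW : (W * W).trace = 0 := by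
      conv_lhs => rw [hWdef]
      rw [show (((∑ j, c j • A j) : Mat n) * W).trace = ∑ j, c j * (A j * W).trace from
        trace_sum_mul W c A]
      refine Finset.sum_eq_zero fun j _ => ?_
      rw [trace_mul_comm, hWA j, mul_zero]
    have hWs : W.IsSymm := by
      show Wᵀ = W
      rw [hWdef, Matrix.transpose_sum]
      exact Finset.sum_congr rfl fun j _ => by rw [Matrix.transpose_smul, hAsymm j]
    have hW0 : W = 0 := symm_eq_zero_of_trace_sq hWs hWW
    funext i
    exact Fintype.linearIndependent_iff.mp hAli c (by rw [← hWdef]; exact hW0) i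
  have hφinj : Function.Injective φ := by
    intro a c hac
    have h0 : φ (a - c) = 0 := by rw [map_sub, hac, sub_self]
    have := hφ0 _ h0
    exact sub_eq_zero.mp this
  obtain ⟨c, hc⟩ := LinearMap.surjective_of_injective hφinj (fun i => (Y * A i).trace)
  -- W := Y - ∑ c j • A j  lies in the span of the B's (j ≠ 0), and is zero
  set W : Mat n := Y - ∑ j, c j • A j with hWdef
  have hWA : ∀ i, (W * A i).trace = 0 := by
    intro i
    rw [hWdef, Matrix.sub_mul, Matrix.trace_sub, hφapply c i, hc]
    simp
  have hWs : W.IsSymm := by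
    show Wᵀ = W
    rw [hWdef, Matrix.transpose_sub, hYs.eq, Matrix.transpose_sum]
    congr 1
    exact Finset.sum_congr rfl fun j _ => by rw [Matrix.transpose_smul, hAsymm j]
  have hWspan : W ∈ Submodule.span ℝ (B '' {j | j ≠ 0}) := (hBspan W).mpr ⟨hWs, hWA⟩
  have himg : B '' {j | j ≠ 0} = Set.range (fun j : {j : Fin (nt - m + 1) // j ≠ 0} => B j.1) := by
    rw [Set.image_eq_range]
    rfl
  rw [himg, Submodule.mem_span_range_iff_exists_fun] at hWspan
  obtain ⟨e, he⟩ := hWspan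
  -- trace (B j * A i) = 0 for j ≠ 0
  have hBA : ∀ (j : {j : Fin (nt - m + 1) // j ≠ 0}) (i : Fin m), (B j.1 * A i).trace = 0 := by
    intro j i
    have hmem : B j.1 ∈ Submodule.span ℝ (B '' {j | j ≠ 0}) :=
      Submodule.subset_span ⟨j.1, j.2, rfl⟩
    exact ((hBspan _).mp hmem).2 i
  have hWW : (W * W).trace = 0 := by
    have h1 : (W * W).trace = ∑ j : {j : Fin (nt - m + 1) // j ≠ 0}, e j * (W * B j.1).trace := by
      conv_lhs => rw [show W * W = W * ∑ j : {j : Fin (nt - m + 1) // j ≠ 0}, e j • B j.1 by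
        rw [he]]
      exact trace_mul_sum W e _
    rw [h1]
    refine Finset.sum_eq_zero fun j _ => ?_
    have hBjY : (B j.1 * Y).trace = 0 := by
      have := hBY j.1
      rw [if_neg j.2] at this
      linarith
    have : (W * B j.1).trace = 0 := by
      rw [trace_mul_comm, hWdef, Matrix.mul_sub, Matrix.trace_sub, hBjY,
        trace_mul_sum (B j.1) c A]
      simp only [zero_sub, neg_eq_zero]
      refine Finset.sum_eq_zero fun i _ => ?_
      rw [hBA j i, mul_zero]
    rw [this, mul_zero]
  have hW0 : W = 0 := symm_eq_zero_of_trace_sq hWs hWW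
  have hYdec : Y = ∑ j, c j • A j := by
    have := sub_eq_zero.mp (by rw [← hWdef]; exact hW0)
    exact this
  -- ∑ c i * b i = -s
  have hB0A : ∀ i, (B 0 * A i).trace = d1 * b i := by
    intro i
    have := hB1A i
    linarith
  have hB0Y : (B 0 * Y).trace = d1 * ∑ i, c i * b i := by
    rw [hYdec, trace_mul_sum (B 0) c A, Finset.mul_sum]
    exact Finset.sum_congr rfl fun i _ => by rw [hB0A i]; ring
  have hcb : ∑ i, c i * b i = -s := by
    have h := hBY 0
    rw [if_pos rfl, hB0Y] at h
    have : d1 * (∑ i, c i * b i + s) = 0 := by ring_nf; ring_nf at h; linarith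
    have := mul_eq_zero.mp this
    rcases this with h' | h'
    · exact absurd h' hd1
    · linarith
  -- final contradiction
  have hXYneg : (X * Y).trace = -s * t := by
    rw [hYdec, trace_mul_sum X c A]
    have : ∀ i, (X * A i).trace = b i * t := by
      intro i; rw [trace_mul_comm]; exact hAX i
    calc ∑ i, c i * (X * A i).trace
        = ∑ i, (c i * b i) * t := Finset.sum_congr rfl fun i _ => by rw [this i]; ring
      _ = (∑ i, c i * b i) * t := by rw [Finset.sum_mul]
      _ = -s * t := by rw [hcb]
  have hXYnonneg : 0 ≤ (X * Y).trace :=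
    trace_mul_nonneg (hX.posSemidef.submatrix _) (hY.posSemidef.submatrix _)
  nlinarith [mul_pos hs ht]


end
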